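/- Let N ≥ 1, let A = (A_{ij}) and B = (B_{ij}) be N × N real symmetric matrices with ordered eigenvalues λ₁(A) ≤ ⋯ ≤ λ_N(A) and λ₁(B) ≤ ⋯ ≤ λ_N(B), and let f ∈ C¹(ℝ) have bounded derivative. Then |(1/N) Σ_{i=1}^N ( f(λ_i(A)) − f(λ_i(B)) )|² ≤ (1/N) ‖f′‖_∞² Σ_{i,j=1}^N (A_{ij} − B_{ij})²; equivalently, |⟨f, μ_A⟩ − ⟨f, μ_B⟩| ≤ ‖f′‖_∞ N^{−1/2} ‖A − B‖_F. -/

import Mathlib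

/-!
Diagonalize `A = U diag(λ(A)) Uᵀ` and `B = V diag(λ(B)) Vᵀ` with the eigenvalues sorted increasingly.
With `W = Uᵀ V`, unitary invariance of the Frobenius norm gives
`‖A - B‖_F² = Σᵢⱼ Wᵢⱼ² (λᵢ(A) - λⱼ(B))²`. The matrix `(Wᵢⱼ²)` is doubly stochastic, so by Birkhoff's
theorem this is a convex combination of the sums `Σᵢ (λᵢ(A) - λ_{σ i}(B))²`, each of which is at
least `Σᵢ (λᵢ(A) - λᵢ(B))²` by the rearrangement inequality (Hoffman–Wielandt). The statement then
follows from `|f x - f y| ≤ ‖f′‖_∞ |x - y|` and Cauchy–Schwarz.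
-/

open Matrix Finset

theorem Monovary.sum_sub_sq_le_sum_sub_comp_perm_sq {ι : Type*} [Fintype ι] {a b : ι → ℝ}
    (hab : Monovary a b) (σ : Equiv.Perm ι) :
    ∑ i, (a i - b i) ^ 2 ≤ ∑ i, (a i - b (σ i)) ^ 2 := by
  have hperm : ∑ i, b (σ i) ^ 2 = ∑ i, b i ^ 2 := Equiv.sum_comp σ (b · ^ 2)
  have hcross := hab.sum_mul_comp_perm_le_sum_mul (σ := σ)
  simp only [sub_sq, sum_add_distrib, sum_sub_distrib, mul_assoc, ← mul_sum]
  linarith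

theorem le_sum_mul_of_mem_doublyStochastic {R n : Type*} [Field R] [LinearOrder R]
    [IsStrictOrderedRing R] [Fintype n] [DecidableEq n] {S : Matrix n n R}
    (hS : S ∈ doublyStochastic R n) (c : n → n → R) {m : R}
    (hm : ∀ σ : Equiv.Perm n, m ≤ ∑ i, c i (σ i)) :
    m ≤ ∑ i, ∑ j, S i j * c i j := by
  rw [← SetLike.mem_coe, doublyStochastic_eq_convexHull_permMatrix] at hS
  have hlin : IsLinearMap R fun M : Matrix n n R => ∑ i, ∑ j, M i j * c i j :=
    ⟨fun M M' => by simp only [Matrix.add_apply, add_mul, sum_add_distrib],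
     fun r M => by simp only [Matrix.smul_apply, smul_eq_mul, mul_assoc, mul_sum]⟩
  refine convexHull_min ?_ (convex_halfSpace_ge hlin m) hS
  rintro _ ⟨σ, rfl⟩
  simpa [PEquiv.toMatrix_apply, ite_mul, eq_comm] using hm σ

namespace Matrix

variable {m n : Type*} [Fintype m] [Fintype n]

theorem of_sq_mem_doublyStochastic [DecidableEq n] {W : Matrix n n ℝ}
    (hW : W ∈ unitaryGroup n ℝ) : of (fun i j => W i j ^ 2) ∈ doublyStochastic ℝ n := by
  refine mem_doublyStochastic_iff_sum.2 ⟨fun i j => sq_nonneg _, fun i => ?_, fun j => ?_⟩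
  · simpa [mul_apply, sq] using congr_fun₂ (mem_unitaryGroup_iff.1 hW) i i
  · simpa [mul_apply, sq] using congr_fun₂ (mem_unitaryGroup_iff'.1 hW) j j

theorem sum_sq_eq_trace_mul_conjTranspose (M : Matrix m n ℝ) :
    ∑ i, ∑ j, M i j ^ 2 = trace (M * Mᴴ) := by
  simp [trace, mul_apply, sq]

theorem sum_sq_unitary_mul [DecidableEq m] {U : Matrix m m ℝ} (hU : U ∈ unitaryGroup m ℝ)
    (M : Matrix m n ℝ) : ∑ i, ∑ j, (U * M) i j ^ 2 = ∑ i, ∑ j, M i j ^ 2 := by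
  rw [sum_sq_eq_trace_mul_conjTranspose, sum_sq_eq_trace_mul_conjTranspose, conjTranspose_mul,
    Matrix.mul_assoc, trace_mul_comm, Matrix.mul_assoc, Matrix.mul_assoc,
    ← star_eq_conjTranspose, mem_unitaryGroup_iff'.1 hU, Matrix.mul_one]

theorem sum_sq_mul_unitary [DecidableEq n] (M : Matrix m n ℝ) {V : Matrix n n ℝ}
    (hV : V ∈ unitaryGroup n ℝ) : ∑ i, ∑ j, (M * V) i j ^ 2 = ∑ i, ∑ j, M i j ^ 2 := by
  rw [sum_sq_eq_trace_mul_conjTranspose, sum_sq_eq_trace_mul_conjTranspose, conjTranspose_mul,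
    Matrix.mul_assoc, ← Matrix.mul_assoc V, ← star_eq_conjTranspose, mem_unitaryGroup_iff.1 hV,
    Matrix.one_mul]

variable [DecidableEq n]

theorem sum_sq_conj_diagonal_sub_conj_diagonal {U V : Matrix n n ℝ} (hU : U ∈ unitaryGroup n ℝ)
    (hV : V ∈ unitaryGroup n ℝ) (a b : n → ℝ) :
    ∑ i, ∑ j, (U * diagonal a * star U - V * diagonal b * star V) i j ^ 2
      = ∑ i, ∑ j, (star U * V) i j ^ 2 * (a i - b j) ^ 2 := by
  have hconj : star U * (U * diagonal a * star U - V * diagonal b * star V) * V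
      = diagonal a * (star U * V) - (star U * V) * diagonal b := by
    simp only [mul_sub, sub_mul, ← mul_assoc, mem_unitaryGroup_iff'.1 hU, one_mul]
    simp only [mul_assoc, mem_unitaryGroup_iff'.1 hV, mul_one]
  rw [← sum_sq_mul_unitary _ hV, ← sum_sq_unitary_mul (Unitary.star_mem hU), ← mul_assoc, hconj]
  simp only [Matrix.sub_apply, diagonal_mul, mul_diagonal]
  congr! 2 with i _ j _
  ring

theorem hoffman_wielandt {a b : n → ℝ} (hab : Monovary a b) {U V : Matrix n n ℝ}
    (hU : U ∈ unitaryGroup n ℝ) (hV : V ∈ unitaryGroup n ℝ) :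
    ∑ i, (a i - b i) ^ 2
      ≤ ∑ i, ∑ j, (U * diagonal a * star U - V * diagonal b * star V) i j ^ 2 := by
  rw [sum_sq_conj_diagonal_sub_conj_diagonal hU hV]
  exact le_sum_mul_of_mem_doublyStochastic
    (of_sq_mem_doublyStochastic (mul_mem (Unitary.star_mem hU) hV)) (fun i j => (a i - b j) ^ 2)
    hab.sum_sub_sq_le_sum_sub_comp_perm_sq

variable {𝕜 : Type*} [RCLike 𝕜]

theorem submatrix_id_mem_unitaryGroup {U : Matrix n n 𝕜} (hU : U ∈ unitaryGroup n 𝕜)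
    (σ : Equiv.Perm n) : U.submatrix id σ ∈ unitaryGroup n 𝕜 := by
  rw [mem_unitaryGroup_iff', star_eq_conjTranspose, conjTranspose_submatrix,
    ← submatrix_mul _ _ _ _ _ Function.bijective_id, ← star_eq_conjTranspose,
    mem_unitaryGroup_iff'.1 hU, submatrix_one_equiv]

theorem IsHermitian.exists_mem_unitaryGroup_eq_conj_diagonal_comp {A : Matrix n n 𝕜}
    (hA : A.IsHermitian) (σ : Equiv.Perm n) :
    ∃ U ∈ unitaryGroup n 𝕜, A = U * diagonal (RCLike.ofReal ∘ hA.eigenvalues ∘ σ) * star U := by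
  refine ⟨_, submatrix_id_mem_unitaryGroup hA.eigenvectorUnitary.2 σ, ?_⟩
  conv_lhs => rw [hA.spectral_theorem, Unitary.conjStarAlgAut_apply]
  rw [← Function.comp_assoc, ← submatrix_diagonal_equiv]
  simp only [star_eq_conjTranspose, conjTranspose_submatrix, submatrix_mul_equiv, submatrix_id_id]

end Matrix

theorem sq_abs_avg_sub_le {ι : Type*} [Fintype ι] {g : ℝ → ℝ} {L : ℝ}
    (hg : ∀ x y, |g x - g y| ≤ L * |x - y|) (x y : ι → ℝ) :
    |(1 / (Fintype.card ι : ℝ)) * ∑ i, (g (x i) - g (y i))| ^ 2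
      ≤ (1 / (Fintype.card ι : ℝ)) * L ^ 2 * ∑ i, (x i - y i) ^ 2 := by
  have hpt : ∀ i, (g (x i) - g (y i)) ^ 2 ≤ L ^ 2 * (x i - y i) ^ 2 := fun i => by
    simpa only [sq_abs, mul_pow] using pow_le_pow_left₀ (abs_nonneg _) (hg (x i) (y i)) 2
  calc |(1 / (Fintype.card ι : ℝ)) * ∑ i, (g (x i) - g (y i))| ^ 2
      = ((∑ i, (g (x i) - g (y i))) / #univ) ^ 2 := by
        rw [sq_abs, card_univ, one_div_mul_eq_div]
    _ ≤ (∑ i, (g (x i) - g (y i)) ^ 2) / #univ := sum_div_card_sq_le_sum_sq_div_card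
    _ ≤ (∑ i, L ^ 2 * (x i - y i) ^ 2) / #univ := by gcongr with i; exact hpt i
    _ = (1 / (Fintype.card ι : ℝ)) * L ^ 2 * ∑ i, (x i - y i) ^ 2 := by
        rw [← mul_sum, card_univ]; ring

theorem sq_abs_avg_spectral_statistic_sub_le_general
    (N : ℕ)
    (A B : Matrix (Fin N) (Fin N) ℝ) (hA : A.IsHermitian) (hB : B.IsHermitian)
    (lA lB : Fin N → ℝ) (hlAmono : Monotone lA) (hlBmono : Monotone lB)
    (σA σB : Equiv.Perm (Fin N))
    (hlA : lA = hA.eigenvalues ∘ σA) (hlB : lB = hB.eigenvalues ∘ σB)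
    (f : ℝ → ℝ) (hf : ContDiff ℝ 1 f) (L : ℝ) (hL : ∀ x, |deriv f x| ≤ L) :
    |(1 / (N : ℝ)) * ∑ i, (f (lA i) - f (lB i))| ^ 2
      ≤ (1 / (N : ℝ)) * L ^ 2 * ∑ i, ∑ j, (A i j - B i j) ^ 2 := by
  obtain ⟨U, hU, hAU⟩ := hA.exists_mem_unitaryGroup_eq_conj_diagonal_comp σA
  obtain ⟨V, hV, hBV⟩ := hB.exists_mem_unitaryGroup_eq_conj_diagonal_comp σB
  rw [← hlA, RCLike.ofReal_real_eq_id, Function.id_comp] at hAU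
  rw [← hlB, RCLike.ofReal_real_eq_id, Function.id_comp] at hBV
  have hHW : ∑ i, (lA i - lB i) ^ 2 ≤ ∑ i, ∑ j, (A i j - B i j) ^ 2 := by
    simpa only [hAU, hBV, Matrix.sub_apply] using
      hoffman_wielandt (hlAmono.monovary hlBmono) hU hV
  have hLip : ∀ x y, |f x - f y| ≤ L * |x - y| := fun x y => by
    simpa only [Real.norm_eq_abs] using convex_univ.norm_image_sub_le_of_norm_deriv_le
      (fun z _ => (hf.differentiable one_ne_zero).differentiableAt)
      (fun z _ => by simpa only [Real.norm_eq_abs] using hL z) (Set.mem_univ y) (Set.mem_univ x)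
  calc |(1 / (N : ℝ)) * ∑ i, (f (lA i) - f (lB i))| ^ 2
      ≤ (1 / (N : ℝ)) * L ^ 2 * ∑ i, (lA i - lB i) ^ 2 := by
        simpa only [Fintype.card_fin] using sq_abs_avg_sub_le hLip lA lB
    _ ≤ (1 / (N : ℝ)) * L ^ 2 * ∑ i, ∑ j, (A i j - B i j) ^ 2 := by gcongr

/-- **Hoffman–Wielandt-type estimate for spectral linear statistics** (cf. eq. (4.4)):
for real symmetric `N × N` matrices `A`, `B` with ordered eigenvalues `λ₁ ≤ ⋯ ≤ λ_N`
(formalized as monotone enumerations `lA`, `lB` obtained from the eigenvalues by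
permutations) and a `C¹` function `f` whose derivative is bounded by `L`,
`|(1/N) Σᵢ (f(λᵢ(A)) − f(λᵢ(B)))|² ≤ (1/N) L² Σᵢⱼ (Aᵢⱼ − Bᵢⱼ)²`. -/
theorem sq_abs_avg_spectral_statistic_sub_le
    (N : ℕ) (hN : 1 ≤ N)
    (A B : Matrix (Fin N) (Fin N) ℝ) (hA : A.IsHermitian) (hB : B.IsHermitian)
    (lA lB : Fin N → ℝ) (hlAmono : Monotone lA) (hlBmono : Monotone lB)
    (σA σB : Equiv.Perm (Fin N))
    (hlA : lA = hA.eigenvalues ∘ σA) (hlB : lB = hB.eigenvalues ∘ σB)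
    (f : ℝ → ℝ) (hf : ContDiff ℝ 1 f) (L : ℝ) (hL : ∀ x, |deriv f x| ≤ L) :
    |(1 / (N : ℝ)) * ∑ i, (f (lA i) - f (lB i))| ^ 2
      ≤ (1 / (N : ℝ)) * L ^ 2 * ∑ i, ∑ j, (A i j - B i j) ^ 2 :=
  sq_abs_avg_spectral_statistic_sub_le_general N A B hA hB lA lB hlAmono hlBmono σA σB hlA hlB f hf
    L hL
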